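/- Let Γ be an m×m real symmetric positive definite matrix, let U be an m×m real matrix with Uᵀ Γ⁻¹ U = I, and let Λ = diag(λ₁, …, λ_m) with λ₁ ≥ λ₂ ≥ … ≥ λ_m ≥ 0. Set F_ss := Γ⁻¹ U Λ Uᵀ Γ⁻¹ + Γ⁻¹, so that F_ss⁻¹ = Γ − U D Uᵀ with D = diag(λᵢ/(1+λᵢ)). For 1 ≤ k < m let U_k be the m×k matrix of the first k columns of U and D_k = diag(λ₁/(1+λ₁), …, λ_k/(1+λ_k)). Then for M = Γ and for M = Γ⁻¹, the truncation error satisfies ‖F_ss⁻¹ − (Γ − U_k D_k U_kᵀ)‖_M ≤ (λ_{k+1}/(1 + λ_{k+1})) ‖Γ‖₂. -/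

import Mathlib

/-!
Woodbury's identity gives `F_ss⁻¹ = Γ - U D Uᵀ`, so the truncation error is `-U E Uᵀ`, where `E` is
the part of `D` discarded by the truncation; since `t ↦ t / (1 + t)` is increasing, every entry of
`E` lies in `[0, λ_{k+1} / (1 + λ_{k+1})]`. A square `U` with `Uᵀ Γ⁻¹ U = I` also satisfies
`U Uᵀ = Γ`, so `z ↦ U z` is an isometry from the Euclidean norm onto the `Γ⁻¹`-norm and
`x ↦ Uᵀ x` one from the `Γ`-norm onto the Euclidean norm. Hence `‖U E Uᵀ x‖_{Γ⁻¹} ≤ ‖E‖ ‖x‖_Γ`.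
This mixed bound turns into both claimed bounds via `‖x‖_Γ ≤ ‖Γ‖₂ ‖x‖_{Γ⁻¹}`, which is
Cauchy–Schwarz for the form of `Γ` applied to `xᵀx = xᵀ Γ (Γ⁻¹ x)`.
-/

open Matrix

/-- The vector `M`-norm `‖x‖_M = √(xᵀ M x)`. -/
noncomputable def vecMNorm {m : ℕ} (M : Matrix (Fin m) (Fin m) ℝ) (x : Fin m → ℝ) : ℝ :=
  Real.sqrt (x ⬝ᵥ (M *ᵥ x))

/-- The induced matrix `M`-norm `‖A‖_M = sup_{x ≠ 0} ‖A x‖_M / ‖x‖_M`. -/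
noncomputable def matMNorm {m : ℕ} (M A : Matrix (Fin m) (Fin m) ℝ) : ℝ :=
  ⨆ x : {x : Fin m → ℝ // x ≠ 0}, vecMNorm M (A *ᵥ (x : Fin m → ℝ)) / vecMNorm M (x : Fin m → ℝ)

/-- The spectral norm (operator norm induced by the Euclidean vector norm). -/
noncomputable def specNorm {m : ℕ} (A : Matrix (Fin m) (Fin m) ℝ) : ℝ :=
  ‖Matrix.toEuclideanCLM (𝕜 := ℝ) A‖

section LinearAlgebra

variable {n K : Type*} [Fintype n] [DecidableEq n] [Field K]

theorem mul_transpose_eq_of_transpose_mul_inv_mul_eq_one {Γ U : Matrix n n K}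
    (hΓ : IsUnit Γ.det) (hU : Uᵀ * Γ⁻¹ * U = 1) : U * Uᵀ = Γ := by
  calc U * Uᵀ = U * (Uᵀ * Γ⁻¹) * Γ := by simp [Matrix.mul_assoc, nonsing_inv_mul Γ hΓ]
    _ = Γ := by rw [mul_eq_one_comm.mp hU, Matrix.one_mul]

theorem inv_inv_mul_diagonal_mul_inv_add_inv {Γ U : Matrix n n K} (lam : n → K)
    (hΓ : IsUnit Γ.det) (hU : Uᵀ * Γ⁻¹ * U = 1) (hlam : ∀ i, 1 + lam i ≠ 0) :
    (Γ⁻¹ * U * diagonal lam * Uᵀ * Γ⁻¹ + Γ⁻¹)⁻¹ =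
      Γ - U * diagonal (fun i => lam i / (1 + lam i)) * Uᵀ := by
  set D := diagonal (fun i => lam i / (1 + lam i)) with hD
  have hdiag : diagonal lam - diagonal lam * D - D = 0 := by
    rw [hD, diagonal_mul_diagonal, diagonal_sub, diagonal_sub, diagonal_eq_zero]
    funext i
    rw [Pi.zero_apply]
    field_simp [hlam i]
    ring
  refine inv_eq_right_inv ?_
  calc (Γ⁻¹ * U * diagonal lam * Uᵀ * Γ⁻¹ + Γ⁻¹) * (Γ - U * D * Uᵀ)
      = Γ⁻¹ * U * diagonal lam * Uᵀ * (Γ⁻¹ * Γ) + Γ⁻¹ * Γ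
          - Γ⁻¹ * U * (diagonal lam * (Uᵀ * Γ⁻¹ * U) * D + D) * Uᵀ := by noncomm_ring
    _ = Γ⁻¹ * U * (diagonal lam - diagonal lam * D - D) * Uᵀ + 1 := by
        rw [hU, nonsing_inv_mul Γ hΓ]; noncomm_ring
    _ = 1 := by rw [hdiag]; simp

end LinearAlgebra

theorem submatrix_castLE_mul_diagonal_mul_transpose {n R : Type*} [CommSemiring R] {k m : ℕ}
    (A : Matrix n (Fin m) R) (h : k ≤ m) (f : Fin m → R) :
    A.submatrix id (Fin.castLE h) * diagonal (fun i => f (Fin.castLE h i)) *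
        (A.submatrix id (Fin.castLE h))ᵀ =
      A * diagonal (fun i : Fin m => if (i : ℕ) < k then f i else 0) * Aᵀ := by
  ext i j
  simp only [mul_apply, diagonal_apply, mul_ite, mul_zero, Finset.sum_ite_eq',
    Finset.mem_univ, if_true, submatrix_apply, id, transpose_apply]
  refine Fintype.sum_of_injective (Fin.castLE h) (Fin.castLE_injective h) _ _ (fun a ha => ?_)
    (fun b => by simp)
  rw [Fin.range_castLE, Set.mem_ofPred_eq] at ha
  simp [ha]

theorem norm_truncate_sub_le {m k : ℕ} {f : Fin m → ℝ} (hf : Antitone f) (hf0 : ∀ i, 0 ≤ f i)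
    (hk : k < m) : ‖fun i : Fin m => (if (i : ℕ) < k then f i else 0) - f i‖ ≤ f ⟨k, hk⟩ := by
  refine (pi_norm_le_iff_of_nonneg (hf0 _)).mpr fun i => ?_
  split_ifs with hi
  · simpa using hf0 _
  · rw [zero_sub, norm_neg, Real.norm_of_nonneg (hf0 i)]
    exact hf (Fin.mk_le_of_le_val (not_lt.mp hi))

theorem antitone_div_one_add {m : ℕ} {lam : Fin m → ℝ} (hlam : Antitone lam)
    (hnonneg : ∀ i, 0 ≤ lam i) : Antitone fun i => lam i / (1 + lam i) := by
  intro i j hij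
  have := hlam hij
  rw [div_le_div_iff₀ (by linarith [hnonneg j]) (by linarith [hnonneg i])]
  nlinarith

theorem Matrix.PosSemidef.sq_dotProduct_mulVec_le {n : Type*} [Fintype n] {G : Matrix n n ℝ}
    (hG : G.PosSemidef) (u v : n → ℝ) :
    (u ⬝ᵥ G *ᵥ v) ^ 2 ≤ (u ⬝ᵥ G *ᵥ u) * (v ⬝ᵥ G *ᵥ v) := by
  have hsymm : v ⬝ᵥ G *ᵥ u = u ⬝ᵥ G *ᵥ v := by
    rw [dotProduct_mulVec, ← mulVec_transpose, dotProduct_comm,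
      ← conjTranspose_eq_transpose_of_trivial, hG.isHermitian.eq]
  have hquad : ∀ t : ℝ,
      0 ≤ (u ⬝ᵥ G *ᵥ u) * (t * t) + 2 * (u ⬝ᵥ G *ᵥ v) * t + v ⬝ᵥ G *ᵥ v := fun t => by
    have h := hG.dotProduct_mulVec_nonneg (t • u + v)
    simp only [star_trivial, mulVec_add, mulVec_smul, dotProduct_add, add_dotProduct,
      dotProduct_smul, smul_dotProduct, smul_eq_mul, hsymm] at h
    linarith
  have := discrim_le_zero hquad
  rw [discrim] at this
  linarith

section MNorm

variable {m : ℕ}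

theorem vecMNorm_mulVec (M A : Matrix (Fin m) (Fin m) ℝ) (x : Fin m → ℝ) :
    vecMNorm M (A *ᵥ x) = vecMNorm (Aᵀ * M * A) x := by
  rw [vecMNorm, vecMNorm, ← mulVec_mulVec, ← mulVec_mulVec, dotProduct_mulVec x Aᵀ,
    vecMul_transpose]

theorem sq_vecMNorm {M : Matrix (Fin m) (Fin m) ℝ} (hM : M.PosSemidef) (x : Fin m → ℝ) :
    vecMNorm M x ^ 2 = x ⬝ᵥ M *ᵥ x :=
  Real.sq_sqrt (by simpa using hM.dotProduct_mulVec_nonneg x)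

theorem abs_dotProduct_mulVec_le {M : Matrix (Fin m) (Fin m) ℝ} (hM : M.PosSemidef)
    (u v : Fin m → ℝ) : |u ⬝ᵥ M *ᵥ v| ≤ vecMNorm M u * vecMNorm M v := by
  rw [vecMNorm, vecMNorm, ← Real.sqrt_mul (by simpa using hM.dotProduct_mulVec_nonneg u)]
  exact Real.abs_le_sqrt (hM.sq_dotProduct_mulVec_le u v)

theorem vecMNorm_one (x : Fin m → ℝ) :
    vecMNorm 1 x = ‖WithLp.toLp 2 x‖ := by
  rw [vecMNorm, ← Matrix.inner_toEuclideanCLM, map_one, one_apply_eq_self,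
    real_inner_self_eq_norm_sq, Real.sqrt_sq (norm_nonneg _)]

theorem vecMNorm_one_mulVec_le (A : Matrix (Fin m) (Fin m) ℝ) (x : Fin m → ℝ) :
    vecMNorm 1 (A *ᵥ x) ≤ specNorm A * vecMNorm 1 x := by
  simpa [vecMNorm_one, specNorm] using (toEuclideanCLM (𝕜 := ℝ) A).le_opNorm (WithLp.toLp 2 x)

theorem dotProduct_mulVec_le_specNorm_mul (A : Matrix (Fin m) (Fin m) ℝ) (x : Fin m → ℝ) :
    x ⬝ᵥ A *ᵥ x ≤ specNorm A * vecMNorm 1 x ^ 2 := by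
  calc x ⬝ᵥ A *ᵥ x = inner ℝ (WithLp.toLp 2 x) (toEuclideanCLM (𝕜 := ℝ) A (WithLp.toLp 2 x)) :=
        (Matrix.inner_toEuclideanCLM _ _ _).symm
    _ ≤ vecMNorm 1 x * vecMNorm 1 (A *ᵥ x) := by
        simpa [vecMNorm_one] using real_inner_le_norm _ _
    _ ≤ vecMNorm 1 x * (specNorm A * vecMNorm 1 x) := by
        gcongr
        · exact Real.sqrt_nonneg _
        · exact vecMNorm_one_mulVec_le A x
    _ = specNorm A * vecMNorm 1 x ^ 2 := by ring

open scoped Matrix.Norms.L2Operator in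
theorem specNorm_diagonal (e : Fin m → ℝ) : specNorm (diagonal e) = ‖e‖ :=
  l2_opNorm_diagonal e

theorem matMNorm_le_of_forall {M A : Matrix (Fin m) (Fin m) ℝ} {C : ℝ} (hC : 0 ≤ C)
    (h : ∀ x, vecMNorm M (A *ᵥ x) ≤ C * vecMNorm M x) : matMNorm M A ≤ C :=
  Real.iSup_le (fun x => div_le_of_le_mul₀ (Real.sqrt_nonneg _) hC (h x)) hC

theorem vecMNorm_le_specNorm_mul_vecMNorm_inv {Γ : Matrix (Fin m) (Fin m) ℝ} (hΓ : Γ.PosDef)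
    (x : Fin m → ℝ) : vecMNorm Γ x ≤ specNorm Γ * vecMNorm Γ⁻¹ x := by
  have hdet : IsUnit Γ.det := (isUnit_iff_isUnit_det Γ).mp hΓ.isUnit
  have hinvT : Γ⁻¹ᵀ = Γ⁻¹ := by
    rw [← conjTranspose_eq_transpose_of_trivial, hΓ.inv.isHermitian.eq]
  have hsq : vecMNorm Γ x ^ 2 ≤ specNorm Γ * vecMNorm 1 x ^ 2 :=
    sq_vecMNorm hΓ.posSemidef x ▸ dotProduct_mulVec_le_specNorm_mul Γ x
  have hcs : vecMNorm 1 x ^ 2 ≤ vecMNorm Γ x * vecMNorm Γ⁻¹ x :=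
    calc vecMNorm 1 x ^ 2 = x ⬝ᵥ Γ *ᵥ (Γ⁻¹ *ᵥ x) := by
          rw [sq_vecMNorm PosSemidef.one, mulVec_mulVec, mul_nonsing_inv Γ hdet]
      _ ≤ vecMNorm Γ x * vecMNorm Γ (Γ⁻¹ *ᵥ x) :=
          (le_abs_self _).trans (abs_dotProduct_mulVec_le hΓ.posSemidef _ _)
      _ = vecMNorm Γ x * vecMNorm Γ⁻¹ x := by
          rw [vecMNorm_mulVec, hinvT, Matrix.mul_assoc, mul_nonsing_inv Γ hdet, Matrix.mul_one]
  have hs : 0 ≤ specNorm Γ := norm_nonneg _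
  have hb : 0 ≤ vecMNorm Γ⁻¹ x := Real.sqrt_nonneg _
  nlinarith [mul_nonneg hs hb]

theorem vecMNorm_inv_mulVec_le {Γ U : Matrix (Fin m) (Fin m) ℝ} (hU : Uᵀ * Γ⁻¹ * U = 1)
    (hΓU : U * Uᵀ = Γ) (e x : Fin m → ℝ) :
    vecMNorm Γ⁻¹ ((U * diagonal e * Uᵀ) *ᵥ x) ≤ ‖e‖ * vecMNorm Γ x :=
  calc vecMNorm Γ⁻¹ ((U * diagonal e * Uᵀ) *ᵥ x) = vecMNorm 1 (diagonal e *ᵥ (Uᵀ *ᵥ x)) := by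
        rw [← mulVec_mulVec, ← mulVec_mulVec, vecMNorm_mulVec, hU]
    _ ≤ ‖e‖ * vecMNorm 1 (Uᵀ *ᵥ x) := specNorm_diagonal e ▸ vecMNorm_one_mulVec_le _ _
    _ = ‖e‖ * vecMNorm Γ x := by rw [vecMNorm_mulVec, transpose_transpose, Matrix.mul_one, hΓU]

theorem matMNorm_le_of_vecMNorm_inv_mulVec_le {Γ A M : Matrix (Fin m) (Fin m) ℝ} {c : ℝ}
    (hΓ : Γ.PosDef) (hc : 0 ≤ c) (h : ∀ x, vecMNorm Γ⁻¹ (A *ᵥ x) ≤ c * vecMNorm Γ x)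
    (hM : M = Γ ∨ M = Γ⁻¹) : matMNorm M A ≤ c * specNorm Γ := by
  have hs : 0 ≤ specNorm Γ := norm_nonneg _
  have hcomp := vecMNorm_le_specNorm_mul_vecMNorm_inv hΓ
  refine matMNorm_le_of_forall (mul_nonneg hc hs) fun x => ?_
  rcases hM with rfl | rfl
  · calc vecMNorm M (A *ᵥ x) ≤ specNorm M * vecMNorm M⁻¹ (A *ᵥ x) := hcomp _
      _ ≤ specNorm M * (c * vecMNorm M x) := by gcongr; exact h x
      _ = c * specNorm M * vecMNorm M x := by ring
  · calc vecMNorm Γ⁻¹ (A *ᵥ x) ≤ c * vecMNorm Γ x := h x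
      _ ≤ c * (specNorm Γ * vecMNorm Γ⁻¹ x) := by gcongr; exact hcomp x
      _ = c * specNorm Γ * vecMNorm Γ⁻¹ x := by ring

end MNorm

theorem stmt_4_general {m k : ℕ} (Γ U : Matrix (Fin m) (Fin m) ℝ) (lam : Fin m → ℝ)
    (hΓ : Γ.PosDef) (hU : Uᵀ * Γ⁻¹ * U = 1)
    (hdec : ∀ i j : Fin m, i ≤ j → lam j ≤ lam i) (hnonneg : ∀ i, 0 ≤ lam i)
    (hk : k < m) :
    ∀ M : Matrix (Fin m) (Fin m) ℝ, (M = Γ ∨ M = Γ⁻¹) →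
      matMNorm M
        ((Γ⁻¹ * U * Matrix.diagonal lam * Uᵀ * Γ⁻¹ + Γ⁻¹)⁻¹ -
          (Γ - (U.submatrix id (Fin.castLE hk.le)) *
            Matrix.diagonal (fun i : Fin k => lam (Fin.castLE hk.le i) / (1 + lam (Fin.castLE hk.le i))) *
            (U.submatrix id (Fin.castLE hk.le))ᵀ)) ≤
        (lam ⟨k, hk⟩ / (1 + lam ⟨k, hk⟩)) * specNorm Γ := by
  intro M hM
  have hdet : IsUnit Γ.det := (isUnit_iff_isUnit_det Γ).mp hΓ.isUnit
  have hd0 : ∀ i, 0 ≤ lam i / (1 + lam i) := fun i => by have := hnonneg i; positivity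
  rw [inv_inv_mul_diagonal_mul_inv_add_inv lam hdet hU (fun i => by linarith [hnonneg i]),
    submatrix_castLE_mul_diagonal_mul_transpose U hk.le (fun i => lam i / (1 + lam i)),
    sub_sub_sub_cancel_left, ← Matrix.sub_mul, ← Matrix.mul_sub, diagonal_sub]
  refine matMNorm_le_of_vecMNorm_inv_mulVec_le hΓ (hd0 _) (fun x => ?_) hM
  refine (vecMNorm_inv_mulVec_le hU (mul_transpose_eq_of_transpose_mul_inv_mul_eq_one hdet hU)
    _ x).trans ?_
  exact mul_le_mul_of_nonneg_right (norm_truncate_sub_le (antitone_div_one_add hdec hnonneg) hd0 hk)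
    (Real.sqrt_nonneg _)

/-- truncation error of the low-rank update form of the posterior
covariance `F_ss⁻¹ = Γ − U D Uᵀ`:
`‖F_ss⁻¹ − (Γ − U_k D_k U_kᵀ)‖_M ≤ (λ_{k+1}/(1+λ_{k+1})) ‖Γ‖₂`
for `M = Γ` and `M = Γ⁻¹`. -/
theorem stmt_4 {m k : ℕ} (Γ U : Matrix (Fin m) (Fin m) ℝ) (lam : Fin m → ℝ)
    (hΓ : Γ.PosDef) (hU : Uᵀ * Γ⁻¹ * U = 1)
    (hdec : ∀ i j : Fin m, i ≤ j → lam j ≤ lam i) (hnonneg : ∀ i, 0 ≤ lam i)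
    (hk1 : 1 ≤ k) (hk : k < m) :
    ∀ M : Matrix (Fin m) (Fin m) ℝ, (M = Γ ∨ M = Γ⁻¹) →
      matMNorm M
        ((Γ⁻¹ * U * Matrix.diagonal lam * Uᵀ * Γ⁻¹ + Γ⁻¹)⁻¹ -
          (Γ - (U.submatrix id (Fin.castLE hk.le)) *
            Matrix.diagonal (fun i : Fin k => lam (Fin.castLE hk.le i) / (1 + lam (Fin.castLE hk.le i))) *
            (U.submatrix id (Fin.castLE hk.le))ᵀ)) ≤
        (lam ⟨k, hk⟩ / (1 + lam ⟨k, hk⟩)) * specNorm Γ :=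
  stmt_4_general Γ U lam hΓ hU hdec hnonneg hk
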